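/- A superintuitionistic logic L is positively defined (i.e., axiomatizable over Int by a set of positive formulas) if and only if its corresponding variety of Heyting algebras V_L is B-saturated. Equivalently: a variety V of Heyting algebras can be defined over the variety of all Heyting algebras by a set of positive equations/formulas if and only if V is B-saturated. -/
import Mathlib


/-- Propositional formulas over ∧, ∨, →, ⊥ and variables. -/
inductive Fml : Type
  | var : ℕ → Fml
  | bot : Fml
  | and : Fml → Fml → Fml
  | or  : Fml → Fml → Fml
  | imp : Fml → Fml → Fml

namespace Fml

/-- A formula is positive if it contains no ⊥. -/
def Positive : Fml → Prop
  | var _ => True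
  | bot => False
  | and A B => A.Positive ∧ B.Positive
  | or A B => A.Positive ∧ B.Positive
  | imp A B => A.Positive ∧ B.Positive

/-- Evaluation in a Brouwerian (generalized Heyting) algebra, with a designated
value `z` interpreting ⊥. -/
def evalB {α : Type} [GeneralizedHeytingAlgebra α] (z : α) (ν : ℕ → α) : Fml → α
  | var n => ν n
  | bot => z
  | and A B => A.evalB z ν ⊓ B.evalB z ν
  | or A B => A.evalB z ν ⊔ B.evalB z ν
  | imp A B => A.evalB z ν ⇨ B.evalB z ν

/-- Evaluation in a Heyting algebra (⊥ interpreted as the least element). -/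
def eval {α : Type} [HeytingAlgebra α] (ν : ℕ → α) (A : Fml) : α := A.evalB ⊥ ν

/-- Evaluation of (positive) formulas in a Brouwerian algebra
(⊥ gets the junk value ⊤; it is irrelevant for positive formulas). -/
def pEval {α : Type} [GeneralizedHeytingAlgebra α] (ν : ℕ → α) (A : Fml) : α := A.evalB ⊤ ν

/-- Substitution. -/
def subst (σ : ℕ → Fml) : Fml → Fml
  | var n => σ n
  | bot => bot
  | and A B => and (A.subst σ) (B.subst σ)
  | or A B => or (A.subst σ) (B.subst σ)
  | imp A B => imp (A.subst σ) (B.subst σ)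

/-- Replacing every occurrence of ⊥ by the formula `C`. -/
def substBot : Fml → Fml → Fml
  | var n, _ => var n
  | bot, C => C
  | and A B, C => and (A.substBot C) (B.substBot C)
  | or A B, C => or (A.substBot C) (B.substBot C)
  | imp A B, C => imp (A.substBot C) (B.substBot C)

/-- The set of variables occurring in a formula. -/
def vars : Fml → Finset ℕ
  | var n => {n}
  | bot => ∅
  | and A B => A.vars ∪ B.vars
  | or A B => A.vars ∪ B.vars
  | imp A B => A.vars ∪ B.vars

end Fml

/-- The set of positive formulas. -/
def PosFml : Set Fml := {A | A.Positive}

/-- A substitution is positive if all its values are positive formulas. -/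
def PosSubst (σ : ℕ → Fml) : Prop := ∀ n, (σ n).Positive

/-- Validity of a formula in a Heyting algebra. -/
def ValidH (α : Type) [HeytingAlgebra α] (A : Fml) : Prop := ∀ ν : ℕ → α, A.eval ν = ⊤

/-- Intuitionistic propositional logic (via algebraic semantics). -/
def IntL : Set Fml := {A | ∀ (α : Type) [HeytingAlgebra α], ValidH α A}

/-- Superintuitionistic logics. -/
structure IsSILogic (L : Set Fml) : Prop where
  int_sub : IntL ⊆ L
  mp : ∀ A B : Fml, Fml.imp A B ∈ L → A ∈ L → B ∈ L
  subst_closed : ∀ A ∈ L, ∀ σ : ℕ → Fml, A.subst σ ∈ L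

/-- The least superintuitionistic logic containing `Γ`. -/
def IntPlus (Γ : Set Fml) : Set Fml := ⋂₀ {L | IsSILogic L ∧ Γ ⊆ L}

/-- The positive fragment of intuitionistic logic. -/
def IntLPos : Set Fml := IntL ∩ PosFml

/-- Positive logics. -/
structure IsPosLogic (P : Set Fml) : Prop where
  pos : P ⊆ PosFml
  int_sub : IntLPos ⊆ P
  mp : ∀ A B : Fml, Fml.imp A B ∈ P → A ∈ P → B ∈ P
  subst_closed : ∀ A ∈ P, ∀ σ : ℕ → Fml, PosSubst σ → A.subst σ ∈ P

/-- The least positive logic containing `Γ`. -/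
def IntPosPlus (Γ : Set Fml) : Set Fml := ⋂₀ {P | IsPosLogic P ∧ Γ ⊆ P}

/-- Homomorphism of Brouwerian algebras (preserves ⊓, ⊔, ⇨, ⊤). -/
def IsBrHom {α β : Type} [GeneralizedHeytingAlgebra α] [GeneralizedHeytingAlgebra β]
    (f : α → β) : Prop :=
  (∀ a b : α, f (a ⊓ b) = f a ⊓ f b) ∧ (∀ a b : α, f (a ⊔ b) = f a ⊔ f b) ∧
  (∀ a b : α, f (a ⇨ b) = f a ⇨ f b) ∧ f ⊤ = ⊤

/-- A Heyting algebra is a model of a set of formulas `T`. -/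
def Models (α : Type) [HeytingAlgebra α] (T : Set Fml) : Prop := ∀ A ∈ T, ValidH α A

/-- The variety (of Heyting algebras) axiomatized by `T` is B-saturated: any Heyting
algebra whose Brouwerian reduct embeds into the reduct of a model of `T` is itself
a model of `T`. -/
def BSaturated (T : Set Fml) : Prop :=
  ∀ (α : Type) (iα : HeytingAlgebra α),
    (∃ (β : Type) (iβ : HeytingAlgebra β), @Models β iβ T ∧
      ∃ f : α → β, Function.Injective f ∧
        @IsBrHom α β iα.toGeneralizedHeytingAlgebra iβ.toGeneralizedHeytingAlgebra f) →
    @Models α iα T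

/-- A subset of a Brouwerian algebra closed under the Brouwerian operations. -/
def BrClosed {α : Type} [GeneralizedHeytingAlgebra α] (S : Set α) : Prop :=
  ⊤ ∈ S ∧ ∀ a ∈ S, ∀ b ∈ S, a ⊓ b ∈ S ∧ a ⊔ b ∈ S ∧ (a ⇨ b) ∈ S

/-- The Brouwerian subalgebra generated by a set. -/
def genBr {α : Type} [GeneralizedHeytingAlgebra α] (s : Set α) : Set α :=
  ⋂₀ {S | BrClosed S ∧ s ⊆ S}

/-- Conjunction of a list of variables (nonempty case is the intended one). -/
def conjList : List ℕ → Fml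
  | [] => Fml.imp (Fml.var 0) (Fml.var 0)
  | [n] => Fml.var n
  | n :: l => Fml.and (Fml.var n) (conjList l)

/-- The conjunction π^∧ of all variables in a finite set π. -/
def conjOf (π : Finset ℕ) : Fml := conjList (π.sort (· ≤ ·))

/-- Multiple-conclusion rules. -/
def MRule : Type := Finset Fml × Finset Fml

/-- A rule is positive if all its premises and conclusions are positive. -/
def PosRule (r : MRule) : Prop := (∀ A ∈ r.1, A.Positive) ∧ (∀ B ∈ r.2, B.Positive)

/-- Validity of a (positive) m-rule in a Brouwerian algebra. -/
def RuleValid (α : Type) [GeneralizedHeytingAlgebra α] (r : MRule) : Prop :=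
  ∀ ν : ℕ → α, (∀ A ∈ r.1, A.pEval ν = ⊤) → ∃ B ∈ r.2, B.pEval ν = ⊤

/-- A Brouwerian algebra is a model of a set of positive formulas. -/
def ModelsP (β : Type) [GeneralizedHeytingAlgebra β] (P : Set Fml) : Prop :=
  ∀ A ∈ P, ∀ ν : ℕ → β, A.pEval ν = ⊤

/-- Filter of a Brouwerian (or Heyting) algebra. -/
def IsFilter' {α : Type} [GeneralizedHeytingAlgebra α] (F : Set α) : Prop :=
  ⊤ ∈ F ∧ ∀ a b : α, a ∈ F → (a ⇨ b) ∈ F → b ∈ F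

/-! ### Auxiliary development -/

namespace Fml

@[simp] theorem eval_var {α : Type} [HeytingAlgebra α] (ν : ℕ → α) (n : ℕ) :
    (var n).eval ν = ν n := rfl
@[simp] theorem eval_bot {α : Type} [HeytingAlgebra α] (ν : ℕ → α) :
    (bot).eval ν = ⊥ := rfl
@[simp] theorem eval_and {α : Type} [HeytingAlgebra α] (ν : ℕ → α) (A B : Fml) :
    (and A B).eval ν = A.eval ν ⊓ B.eval ν := rfl
@[simp] theorem eval_or {α : Type} [HeytingAlgebra α] (ν : ℕ → α) (A B : Fml) :
    (or A B).eval ν = A.eval ν ⊔ B.eval ν := rfl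
@[simp] theorem eval_imp {α : Type} [HeytingAlgebra α] (ν : ℕ → α) (A B : Fml) :
    (imp A B).eval ν = A.eval ν ⇨ B.eval ν := rfl

theorem evalB_subst {α : Type} [GeneralizedHeytingAlgebra α] (z : α) (ν : ℕ → α)
    (σ : ℕ → Fml) (A : Fml) :
    (A.subst σ).evalB z ν = A.evalB z (fun n => (σ n).evalB z ν) := by
  induction A with
  | var n => rfl
  | bot => rfl
  | and A B ihA ihB => simp [subst, evalB, ihA, ihB]
  | or A B ihA ihB => simp [subst, evalB, ihA, ihB]
  | imp A B ihA ihB => simp [subst, evalB, ihA, ihB]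

theorem evalB_congr {α : Type} [GeneralizedHeytingAlgebra α] (z : α) {ν ν' : ℕ → α}
    {A : Fml} (h : ∀ n ∈ A.vars, ν n = ν' n) :
    A.evalB z ν = A.evalB z ν' := by
  induction A with
  | var n => exact h n (by simp [vars])
  | bot => rfl
  | and A B ihA ihB =>
      simp only [evalB]
      rw [ihA fun n hn => h n (by simp [vars, hn]), ihB fun n hn => h n (by simp [vars, hn])]
  | or A B ihA ihB =>
      simp only [evalB]
      rw [ihA fun n hn => h n (by simp [vars, hn]), ihB fun n hn => h n (by simp [vars, hn])]
  | imp A B ihA ihB =>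
      simp only [evalB]
      rw [ihA fun n hn => h n (by simp [vars, hn]), ihB fun n hn => h n (by simp [vars, hn])]

theorem evalB_pos {α : Type} [GeneralizedHeytingAlgebra α] (z z' : α) (ν : ℕ → α)
    {A : Fml} (h : A.Positive) : A.evalB z ν = A.evalB z' ν := by
  induction A with
  | var n => rfl
  | bot => exact absurd h id
  | and A B ihA ihB => simp only [evalB]; rw [ihA h.1, ihB h.2]
  | or A B ihA ihB => simp only [evalB]; rw [ihA h.1, ihB h.2]
  | imp A B ihA ihB => simp only [evalB]; rw [ihA h.1, ihB h.2]

theorem evalB_hom {α β : Type} [GeneralizedHeytingAlgebra α] [GeneralizedHeytingAlgebra β]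
    {f : α → β} (hf : IsBrHom f) (z : α) (ν : ℕ → α) (A : Fml) :
    f (A.evalB z ν) = A.evalB (f z) (f ∘ ν) := by
  induction A with
  | var n => rfl
  | bot => rfl
  | and A B ihA ihB => simp only [evalB]; rw [hf.1, ihA, ihB]
  | or A B ihA ihB => simp only [evalB]; rw [hf.2.1, ihA, ihB]
  | imp A B ihA ihB => simp only [evalB]; rw [hf.2.2.1, ihA, ihB]

theorem evalB_substBot {α : Type} [GeneralizedHeytingAlgebra α] (z : α) (ν : ℕ → α)
    (A C : Fml) : (A.substBot C).evalB z ν = A.evalB (C.evalB z ν) ν := by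
  induction A with
  | var n => rfl
  | bot => rfl
  | and A B ihA ihB => simp [substBot, evalB, ihA, ihB]
  | or A B ihA ihB => simp [substBot, evalB, ihA, ihB]
  | imp A B ihA ihB => simp [substBot, evalB, ihA, ihB]

theorem substBot_positive {C : Fml} (hC : C.Positive) (A : Fml) :
    (A.substBot C).Positive := by
  induction A with
  | var n => trivial
  | bot => exact hC
  | and A B ihA ihB => exact ⟨ihA, ihB⟩
  | or A B ihA ihB => exact ⟨ihA, ihB⟩
  | imp A B ihA ihB => exact ⟨ihA, ihB⟩

theorem subst_var (A : Fml) : A.subst Fml.var = A := by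
  induction A with
  | var n => rfl
  | bot => rfl
  | and A B ihA ihB => simp [subst, ihA, ihB]
  | or A B ihA ihB => simp [subst, ihA, ihB]
  | imp A B ihA ihB => simp [subst, ihA, ihB]

end Fml

theorem conjList_positive (l : List ℕ) : (conjList l).Positive := by
  induction l with
  | nil => exact ⟨trivial, trivial⟩
  | cons n l ih =>
      cases l with
      | nil => trivial
      | cons m l' => exact ⟨trivial, ih⟩

theorem conjList_le {α : Type} [GeneralizedHeytingAlgebra α] (z : α) (ν : ℕ → α)
    {l : List ℕ} {n : ℕ} (hn : n ∈ l) : (conjList l).evalB z ν ≤ ν n := by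
  induction l with
  | nil => cases hn
  | cons m l ih =>
      cases l with
      | nil =>
          rcases List.mem_singleton.1 hn with rfl
          exact le_rfl
      | cons k l' =>
          rcases List.mem_cons.1 hn with rfl | hn'
          · exact inf_le_left
          · exact le_trans inf_le_right (ih hn')

theorem conjOf_positive (π : Finset ℕ) : (conjOf π).Positive := conjList_positive _

theorem conjOf_le {α : Type} [GeneralizedHeytingAlgebra α] (z : α) (ν : ℕ → α)
    {π : Finset ℕ} {n : ℕ} (hn : n ∈ π) : (conjOf π).evalB z ν ≤ ν n :=
  conjList_le z ν ((Finset.mem_sort (α := ℕ) (· ≤ ·)).2 hn)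

/-- The set of formulas valid in a Heyting algebra is a superintuitionistic logic. -/
theorem validSet_si (α : Type) [HeytingAlgebra α] : IsSILogic {A : Fml | ValidH α A} where
  int_sub := fun A hA => hA α
  mp := fun A B hAB hA ν => by
    have h1 := hAB ν
    have h2 := hA ν
    rw [Fml.eval_imp, h2, top_himp] at h1
    exact h1
  subst_closed := fun A hA σ ν => by
    show (A.subst σ).evalB ⊥ ν = ⊤
    rw [Fml.evalB_subst]
    exact hA _

section Logic

variable {L : Set Fml} (hL : IsSILogic L)
include hL

theorem L_taut {A : Fml} (h : ∀ (α : Type) [HeytingAlgebra α] (ν : ℕ → α), A.eval ν = ⊤) :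
    A ∈ L := hL.int_sub (fun α _ => h α)

theorem L_imp {A B : Fml}
    (h : ∀ (α : Type) [HeytingAlgebra α] (ν : ℕ → α), A.eval ν ≤ B.eval ν) :
    Fml.imp A B ∈ L :=
  L_taut hL (fun α _ ν => by rw [Fml.eval_imp, himp_eq_top_iff]; exact h α ν)

theorem L_mp1 {A B : Fml}
    (h : ∀ (α : Type) [HeytingAlgebra α] (ν : ℕ → α), A.eval ν ≤ B.eval ν)
    (hA : A ∈ L) : B ∈ L := hL.mp A B (L_imp hL h) hA

theorem L_and {A B : Fml} (hA : A ∈ L) (hB : B ∈ L) : Fml.and A B ∈ L := by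
  have t : Fml.imp A (Fml.imp B (Fml.and A B)) ∈ L :=
    L_imp hL (fun α _ ν => by simp [le_himp_iff])
  exact hL.mp B _ (hL.mp A _ t hA) hB

theorem L_mp2 {A B C : Fml}
    (h : ∀ (α : Type) [HeytingAlgebra α] (ν : ℕ → α), A.eval ν ⊓ B.eval ν ≤ C.eval ν)
    (hA : A ∈ L) (hB : B ∈ L) : C ∈ L :=
  L_mp1 hL (A := Fml.and A B) (fun α _ ν => by rw [Fml.eval_and]; exact h α ν)
    (L_and hL hA hB)

theorem L_trans {A B C : Fml} (h1 : Fml.imp A B ∈ L) (h2 : Fml.imp B C ∈ L) :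
    Fml.imp A C ∈ L :=
  L_mp2 hL (fun α _ ν => by simp only [Fml.eval_imp]; exact himp_triangle _ _ _) h1 h2

theorem L_and_congr {A A' B B' : Fml} (h1 : Fml.imp A A' ∈ L) (h2 : Fml.imp B B' ∈ L) :
    Fml.imp (Fml.and A B) (Fml.and A' B') ∈ L := by
  refine L_mp2 hL (fun α _ ν => ?_) h1 h2
  simp only [Fml.eval_imp, Fml.eval_and, le_himp_iff]
  exact le_inf ((inf_le_inf inf_le_left inf_le_left).trans himp_inf_le)
    ((inf_le_inf inf_le_right inf_le_right).trans himp_inf_le)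

theorem L_or_congr {A A' B B' : Fml} (h1 : Fml.imp A A' ∈ L) (h2 : Fml.imp B B' ∈ L) :
    Fml.imp (Fml.or A B) (Fml.or A' B') ∈ L := by
  refine L_mp2 hL (fun α _ ν => ?_) h1 h2
  simp only [Fml.eval_imp, Fml.eval_or, le_himp_iff, inf_sup_left]
  exact sup_le ((inf_le_inf inf_le_left le_rfl).trans (himp_inf_le.trans le_sup_left))
    ((inf_le_inf inf_le_right le_rfl).trans (himp_inf_le.trans le_sup_right))

theorem L_imp_congr {A A' B B' : Fml} (h1 : Fml.imp A' A ∈ L) (h2 : Fml.imp B B' ∈ L) :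
    Fml.imp (Fml.imp A B) (Fml.imp A' B') ∈ L := by
  refine L_mp2 hL (fun α _ ν => ?_) h1 h2
  simp only [Fml.eval_imp, le_himp_iff]
  set a := A.eval ν; set b := B.eval ν; set a' := A'.eval ν; set b' := B'.eval ν
  calc (a' ⇨ a) ⊓ (b ⇨ b') ⊓ (a ⇨ b) ⊓ a'
      ≤ (b ⇨ b') ⊓ (a ⇨ b) ⊓ ((a' ⇨ a) ⊓ a') := le_of_eq (by ac_rfl)
    _ ≤ (b ⇨ b') ⊓ (a ⇨ b) ⊓ a := inf_le_inf_left _ himp_inf_le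
    _ = (b ⇨ b') ⊓ ((a ⇨ b) ⊓ a) := inf_assoc _ _ _
    _ ≤ (b ⇨ b') ⊓ b := inf_le_inf_left _ himp_inf_le
    _ ≤ b' := himp_inf_le

end Logic

section Lindenbaum

variable (L : Set Fml) (hL : IsSILogic L)

def lSetoid (L : Set Fml) (hL : IsSILogic L) : Setoid Fml where
  r A B := Fml.imp A B ∈ L ∧ Fml.imp B A ∈ L
  iseqv := by
    refine ⟨fun A => ?_, fun h => ⟨h.2, h.1⟩, fun h1 h2 => ⟨L_trans hL h1.1 h2.1, L_trans hL h2.2 h1.2⟩⟩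
    exact ⟨L_imp hL (fun α _ ν => le_rfl), L_imp hL (fun α _ ν => le_rfl)⟩

def Lind : Type := Quotient (lSetoid L hL)

def lmk (A : Fml) : Lind L hL := Quotient.mk (lSetoid L hL) A

private theorem andResp : ∀ (A B : Fml), (lSetoid L hL).r A B → ∀ (C D : Fml),
    (lSetoid L hL).r C D → (lSetoid L hL).r (Fml.and A C) (Fml.and B D) :=
  fun _ _ h1 _ _ h2 => ⟨L_and_congr hL h1.1 h2.1, L_and_congr hL h1.2 h2.2⟩

private theorem orResp : ∀ (A B : Fml), (lSetoid L hL).r A B → ∀ (C D : Fml),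
    (lSetoid L hL).r C D → (lSetoid L hL).r (Fml.or A C) (Fml.or B D) :=
  fun _ _ h1 _ _ h2 => ⟨L_or_congr hL h1.1 h2.1, L_or_congr hL h1.2 h2.2⟩

private theorem impResp : ∀ (A B : Fml), (lSetoid L hL).r A B → ∀ (C D : Fml),
    (lSetoid L hL).r C D → (lSetoid L hL).r (Fml.imp A C) (Fml.imp B D) :=
  fun _ _ h1 _ _ h2 => ⟨L_imp_congr hL h1.2 h2.1, L_imp_congr hL h1.1 h2.2⟩

instance lindPO : PartialOrder (Lind L hL) where
  le x y := Quotient.liftOn₂ x y (fun A B => Fml.imp A B ∈ L)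
    (fun A C B D h1 h2 => propext
      ⟨fun h => L_trans hL h1.2 (L_trans hL h h2.1),
       fun h => L_trans hL h1.1 (L_trans hL h h2.2)⟩)
  le_refl x := Quotient.inductionOn x (fun A => L_imp hL (fun α _ ν => le_rfl))
  le_trans x y z := Quotient.inductionOn₃ x y z (fun A B C h1 h2 => L_trans hL h1 h2)
  le_antisymm x y := Quotient.inductionOn₂ x y (fun A B h1 h2 => Quotient.sound ⟨h1, h2⟩)

instance lindLat : Lattice (Lind L hL) where
  sup := Quotient.map₂ Fml.or (orResp L hL)
  le_sup_left x y := Quotient.inductionOn₂ x y (fun A B =>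
    L_imp hL (fun α _ ν => by simp))
  le_sup_right x y := Quotient.inductionOn₂ x y (fun A B =>
    L_imp hL (fun α _ ν => by simp))
  sup_le x y z := Quotient.inductionOn₃ x y z (fun A B C h1 h2 =>
    L_mp2 hL (fun α _ ν => by
      simp only [Fml.eval_imp, Fml.eval_or, sup_himp_distrib]; exact le_rfl) h1 h2)
  inf := Quotient.map₂ Fml.and (andResp L hL)
  inf_le_left x y := Quotient.inductionOn₂ x y (fun A B =>
    L_imp hL (fun α _ ν => by simp))
  inf_le_right x y := Quotient.inductionOn₂ x y (fun A B =>
    L_imp hL (fun α _ ν => by simp))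
  le_inf x y z := Quotient.inductionOn₃ x y z (fun A B C h1 h2 =>
    L_mp2 hL (fun α _ ν => by
      simp only [Fml.eval_imp, Fml.eval_and, himp_inf_distrib]; exact le_rfl) h1 h2)

instance lindHA : HeytingAlgebra (Lind L hL) where
  top := lmk L hL (Fml.imp (Fml.var 0) (Fml.var 0))
  le_top x := Quotient.inductionOn x (fun A =>
    L_imp hL (fun α _ ν => by simp))
  himp := Quotient.map₂ Fml.imp (impResp L hL)
  le_himp_iff x y z := Quotient.inductionOn₃ x y z (fun A B C => by
    constructor
    · exact fun h => L_mp1 hL (fun α _ ν => by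
        simp only [Fml.eval_imp, Fml.eval_and, himp_himp]; exact le_rfl) h
    · exact fun h => L_mp1 hL (fun α _ ν => by
        simp only [Fml.eval_imp, Fml.eval_and, himp_himp]; exact le_rfl) h)
  bot := lmk L hL Fml.bot
  bot_le x := Quotient.inductionOn x (fun A =>
    L_imp hL (fun α _ ν => by simp))
  compl x := Quotient.map₂ Fml.imp (impResp L hL) x (lmk L hL Fml.bot)
  himp_bot x := rfl

theorem lind_le_iff {A B : Fml} : lmk L hL A ≤ lmk L hL B ↔ Fml.imp A B ∈ L := Iff.rfl

theorem lind_eval (σ : ℕ → Fml) (A : Fml) :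
    Fml.eval (fun n => lmk L hL (σ n)) A = lmk L hL (A.subst σ) := by
  induction A with
  | var n => rfl
  | bot => rfl
  | and A B ihA ihB =>
      show Fml.eval _ A ⊓ Fml.eval _ B = _
      rw [ihA, ihB]; rfl
  | or A B ihA ihB =>
      show Fml.eval _ A ⊔ Fml.eval _ B = _
      rw [ihA, ihB]; rfl
  | imp A B ihA ihB =>
      show Fml.eval _ A ⇨ Fml.eval _ B = _
      rw [ihA, ihB]; rfl

theorem lind_top_iff {A : Fml} : lmk L hL A = ⊤ ↔ A ∈ L := by
  constructor
  · intro h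
    have hr := Quotient.exact h
    have hT : Fml.imp (Fml.var 0) (Fml.var 0) ∈ L := L_imp hL (fun α _ ν => le_rfl)
    exact hL.mp _ _ hr.2 hT
  · intro hA
    refine Quotient.sound ⟨L_imp hL (fun α _ ν => by simp), ?_⟩
    exact L_mp1 hL (fun α _ ν => by simp only [Fml.eval_imp]; exact le_himp) hA

theorem lind_models : Models (Lind L hL) L := by
  intro A hA ν
  have hν : ∀ n, lmk L hL (ν n).out = ν n := fun n => Quotient.out_eq (ν n)
  have : ν = fun n => lmk L hL (Quotient.out (ν n)) := funext fun n => (hν n).symm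
  rw [this, lind_eval]
  exact (lind_top_iff L hL).2 (hL.subst_closed A hA _)

theorem lind_complete {A : Fml} (h : ValidH (Lind L hL) A) : A ∈ L := by
  have := h (fun n => lmk L hL (Fml.var n))
  rw [lind_eval L hL Fml.var A, Fml.subst_var] at this
  exact (lind_top_iff L hL).1 this

end Lindenbaum

section Interval

variable {α : Type} [HeytingAlgebra α] (z : α)

def Ival : Type := {a : α // z ≤ a}

instance ivalPO : PartialOrder (Ival z) where
  le a b := a.1 ≤ b.1
  le_refl a := le_refl a.1
  le_trans a b c h1 h2 := le_trans h1 h2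
  le_antisymm a b h1 h2 := Subtype.ext (le_antisymm h1 h2)

instance ivalLat : Lattice (Ival z) where
  sup a b := ⟨a.1 ⊔ b.1, a.2.trans le_sup_left⟩
  le_sup_left a b := le_sup_left
  le_sup_right a b := le_sup_right
  sup_le a b c h1 h2 := sup_le h1 h2
  inf a b := ⟨a.1 ⊓ b.1, le_inf a.2 b.2⟩
  inf_le_left a b := inf_le_left
  inf_le_right a b := inf_le_right
  le_inf a b c h1 h2 := le_inf h1 h2

instance ivalHA : HeytingAlgebra (Ival z) where
  top := ⟨⊤, le_top⟩
  le_top a := le_top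
  himp a b := ⟨a.1 ⇨ b.1, b.2.trans le_himp⟩
  le_himp_iff a b c := le_himp_iff
  bot := ⟨z, le_rfl⟩
  bot_le a := a.2
  compl a := ⟨a.1 ⇨ z, le_himp⟩
  himp_bot a := rfl

theorem ival_hom : IsBrHom (fun a : Ival z => a.1) :=
  ⟨fun _ _ => rfl, fun _ _ => rfl, fun _ _ => rfl, rfl⟩

end Interval

section IntPlusLemmas

theorem intPlus_si (Γ : Set Fml) : IsSILogic (IntPlus Γ) where
  int_sub := fun A hA => Set.mem_sInter.2 fun L' hL' => hL'.1.int_sub hA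
  mp := fun A B hAB hA => Set.mem_sInter.2 fun L' hL' =>
    hL'.1.mp A B (Set.mem_sInter.1 hAB L' hL') (Set.mem_sInter.1 hA L' hL')
  subst_closed := fun A hA σ => Set.mem_sInter.2 fun L' hL' =>
    hL'.1.subst_closed A (Set.mem_sInter.1 hA L' hL') σ

theorem subset_intPlus (Γ : Set Fml) : Γ ⊆ IntPlus Γ :=
  fun A hA => Set.mem_sInter.2 fun _ hL' => hL'.2 hA

theorem intPlus_subset {Γ L : Set Fml} (hL : IsSILogic L) (h : Γ ⊆ L) : IntPlus Γ ⊆ L :=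
  fun A hA => Set.mem_sInter.1 hA L ⟨hL, h⟩

end IntPlusLemmas

section Wajsberg

/-- A fresh variable for `A`. -/
def freshv (A : Fml) : ℕ := A.vars.sup id + 1

theorem freshv_not_mem (A : Fml) : freshv A ∉ A.vars := by
  intro h
  have h2 : id (freshv A) ≤ A.vars.sup id := Finset.le_sup h
  simp only [freshv, id] at h2
  omega

/-- The Wajsberg positive approximation of `A`. -/
def Wpi (A : Fml) : Fml := A.substBot (conjOf (insert (freshv A) A.vars))

theorem Wpi_positive (A : Fml) : (Wpi A).Positive :=
  Fml.substBot_positive (conjOf_positive _) A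

theorem wajsberg_valid {L : Set Fml} (hBS : BSaturated L) {A : Fml} (hA : A ∈ L)
    (α : Type) [iα : HeytingAlgebra α] (hα : Models α L) : ValidH α (Wpi A) := by
  intro ν
  set π : Finset ℕ := insert (freshv A) A.vars with hπ
  set z : α := Fml.eval ν (conjOf π) with hzdef
  have hz : ∀ n ∈ π, z ≤ ν n := fun n hn => conjOf_le ⊥ ν hn
  have hβ : Models (Ival z) L := by
    refine hBS (Ival z) (ivalHA z) ⟨α, iα, hα, fun a => a.1, fun a b h => Subtype.ext h, ival_hom z⟩
  set ν' : ℕ → Ival z := fun n => ⟨z ⊔ ν n, le_sup_left⟩ with hν'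
  have h1 : Fml.eval ν' A = ⊤ := hβ A hA ν'
  have h2 : (Fml.eval ν' A).1 = Fml.evalB z (fun n => z ⊔ ν n) A := by
    have := Fml.evalB_hom (ival_hom z) (⊥ : Ival z) ν' A
    exact this
  have h3 : Fml.evalB z (fun n => z ⊔ ν n) A = Fml.evalB z ν A := by
    refine Fml.evalB_congr z fun n hn => ?_
    exact sup_eq_right.2 (hz n (Finset.mem_insert_of_mem hn))
  show (Wpi A).evalB ⊥ ν = ⊤
  rw [Wpi, Fml.evalB_substBot]
  have : (conjOf (insert (freshv A) A.vars)).evalB ⊥ ν = z := rfl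
  rw [this, ← h3, ← h2, h1]
  rfl

theorem wajsberg_recover {Γ : Set Fml} {A : Fml} (hW : Wpi A ∈ IntPlus Γ) :
    A ∈ IntPlus Γ := by
  set m := freshv A with hm
  set σ : ℕ → Fml := fun n => if n = m then Fml.bot else Fml.var n with hσ
  have hWs : (Wpi A).subst σ ∈ IntPlus Γ := (intPlus_si Γ).subst_closed _ hW σ
  have hImp : Fml.imp ((Wpi A).subst σ) A ∈ IntL := by
    intro α _ ν
    have e1 : Fml.eval ν ((Wpi A).subst σ) = Fml.eval ν A := by
      show ((Wpi A).subst σ).evalB ⊥ ν = A.evalB ⊥ ν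
      rw [Fml.evalB_subst, Wpi, Fml.evalB_substBot]
      set νσ : ℕ → α := fun n => (σ n).evalB ⊥ ν with hνσ
      have hc : (conjOf (insert m A.vars)).evalB ⊥ νσ = ⊥ := by
        refine le_antisymm ?_ bot_le
        have h := conjOf_le (⊥ : α) νσ (Finset.mem_insert_self m A.vars)
        have : νσ m = ⊥ := by simp [hνσ, hσ, Fml.evalB]
        rwa [this] at h
      rw [hc]
      refine Fml.evalB_congr ⊥ fun n hn => ?_
      have hnm : n ≠ m := fun h => freshv_not_mem A (by rwa [← hm, ← h])
      simp [hνσ, hσ, hnm, Fml.evalB]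
    rw [Fml.eval_imp, e1, himp_self]
  exact (intPlus_si Γ).mp _ _ ((intPlus_si Γ).int_sub hImp) hWs

end Wajsberg

/-- a superintuitionistic logic is positively axiomatizable over Int
iff its corresponding variety of Heyting algebras is B-saturated. -/
theorem stmt11 (L : Set Fml) (hL : IsSILogic L) :
    (∃ Γ : Set Fml, Γ ⊆ PosFml ∧ L = IntPlus Γ) ↔ BSaturated L := by
  constructor
  · rintro ⟨Γ, hΓpos, hEq⟩
    intro α iα ⟨β, iβ, hβL, f, finj, fhom⟩
    letI := iα; letI := iβ
    have hΓsub : Γ ⊆ L := hEq ▸ subset_intPlus Γ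
    have hβΓ : Models β Γ := fun A hA => hβL A (hΓsub hA)
    have hαΓ : Models α Γ := by
      intro A hA ν
      have hpos : A.Positive := hΓpos hA
      have h1 : f (A.eval ν) = Fml.evalB (f ⊥) (f ∘ ν) A := Fml.evalB_hom fhom ⊥ ν A
      have h2 : Fml.evalB (f ⊥) (f ∘ ν) A = Fml.evalB ⊥ (f ∘ ν) A :=
        Fml.evalB_pos _ _ _ hpos
      have h3 : Fml.evalB (⊥ : β) (f ∘ ν) A = ⊤ := hβΓ A hA (f ∘ ν)
      apply finj
      rw [h1, h2, h3, fhom.2.2.2]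
    rw [hEq]
    intro A hA
    exact Set.mem_sInter.1 hA {B | ValidH α B} ⟨validSet_si α, hαΓ⟩
  · intro hBS
    refine ⟨{B | ∃ A ∈ L, B = Wpi A}, ?_, ?_⟩
    · rintro B ⟨A, _, rfl⟩
      exact Wpi_positive A
    · have hΓsub : {B | ∃ A ∈ L, B = Wpi A} ⊆ L := by
        rintro B ⟨A, hA, rfl⟩
        exact lind_complete L hL (wajsberg_valid hBS hA (Lind L hL) (lind_models L hL))
      refine le_antisymm ?_ (intPlus_subset hL hΓsub)
      intro A hA
      exact wajsberg_recover (subset_intPlus _ ⟨A, hA, rfl⟩)
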